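/- arXiv:2002.09789 — 4 statements merged into one kernel-verified Lean document; each statement's English description precedes it below -/
import Mathlib

section
/- Let R be a finite commutative Frobenius ring of characteristic 2 and let B and C be n×n matrices over R. Then the linear code of length 4n over R generated by the rows of the 2n×4n matrix (I_{2n} | X), where X is the 2×2 block matrix [[B, C],[C, B]], is self-dual if and only if (B+C)(B+C)^T = I_n and B C^T = C B^T. -/
open Matrix

/-- The dual of a code (submodule of `ι → R`) with respect to the standard bilinear form. -/
def dualCode {R : Type*} [CommRing R] {ι : Type*} [Fintype ι]
    (C : Submodule R (ι → R)) : Submodule R (ι → R) where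
  carrier := {x | ∀ c ∈ C, ∑ i, x i * c i = 0}
  add_mem' := by
    intro a b ha hb c hc
    simp only [Set.mem_setOf_eq] at ha hb ⊢
    simp [Pi.add_apply, add_mul, Finset.sum_add_distrib, ha c hc, hb c hc]
  zero_mem' := by
    intro c hc
    simp
  smul_mem' := by
    intro r a ha c hc
    simp only [Set.mem_setOf_eq] at ha ⊢
    simp [Pi.smul_apply, smul_eq_mul, mul_assoc, ← Finset.mul_sum, ha c hc]

/-- A code is self-dual if it equals its dual. -/
def IsSelfDual {R : Type*} [CommRing R] {ι : Type*} [Fintype ι]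
    (C : Submodule R (ι → R)) : Prop :=
  C = dualCode C

/-- The code generated by the rows of a matrix. -/
def rowSpan {R : Type*} [CommRing R] {κ ι : Type*} (M : Matrix κ ι R) :
    Submodule R (ι → R) :=
  Submodule.span R (Set.range M)

/-!
The code spanned by the rows of `M` lies in its dual iff `M Mᵀ = 0`, which for `M = (I | X)`
reads `X Xᵀ = -1`. Conversely, if `X Xᵀ = -1` then `-Xᵀ` is a two-sided inverse of `X`, and any
`(u, v)` orthogonal to the rows satisfies `u = -X v`, so `(u, v) = u (I | X)`: over any
commutative ring the code is self-dual iff `X Xᵀ = -1`. For `X = [[B, C], [C, B]]` block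
multiplication turns this into `B Bᵀ + C Cᵀ = -1` and `B Cᵀ + C Bᵀ = 0`, and in characteristic 2
these say `(B + C)(B + C)ᵀ = 1` and `B Cᵀ = C Bᵀ`.
-/

section RowSpan

variable {R : Type*} [CommRing R] {κ ι : Type*}

lemma vecMul_mem_rowSpan [Fintype κ] (w : κ → R) (M : Matrix κ ι R) : w ᵥ* M ∈ rowSpan M := by
  rw [vecMul_eq_sum]
  exact Submodule.sum_mem _ fun i _ => Submodule.smul_mem _ _ (Submodule.subset_span ⟨i, rfl⟩)

variable [Fintype ι]

lemma mem_dualCode_iff (C : Submodule R (ι → R)) (x : ι → R) :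
    x ∈ dualCode C ↔ ∀ c ∈ C, x ⬝ᵥ c = 0 :=
  Iff.rfl

lemma mem_dualCode_span_iff (S : Set (ι → R)) (x : ι → R) :
    x ∈ dualCode (Submodule.span R S) ↔ ∀ c ∈ S, x ⬝ᵥ c = 0 := by
  rw [mem_dualCode_iff]
  refine ⟨fun hx c hc => hx c (Submodule.subset_span hc), fun hx c hc => ?_⟩
  induction hc using Submodule.span_induction with
  | mem c hc => exact hx c hc
  | zero => exact dotProduct_zero x
  | add c d _ _ hc hd => rw [dotProduct_add, hc, hd, add_zero]
  | smul r c _ hc => rw [dotProduct_smul, hc, smul_zero]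

lemma mem_dualCode_rowSpan_iff (M : Matrix κ ι R) (x : ι → R) :
    x ∈ dualCode (rowSpan M) ↔ M *ᵥ x = 0 := by
  rw [rowSpan, mem_dualCode_span_iff, funext_iff]
  simp only [mulVec, dotProduct_comm, Pi.zero_apply]
  exact Set.forall_mem_range

lemma rowSpan_le_dualCode_iff (M : Matrix κ ι R) :
    rowSpan M ≤ dualCode (rowSpan M) ↔ M * Mᵀ = 0 := by
  rw [rowSpan, Submodule.span_le, ← rowSpan]
  refine Set.forall_mem_range.trans ?_
  simp only [SetLike.mem_coe, mem_dualCode_rowSpan_iff, funext_iff, ← ext_iff]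
  refine forall_comm.trans (forall₂_congr fun i j => ?_)
  simp [mulVec, dotProduct, mul_apply]

end RowSpan

section Systematic

variable {R : Type*} [CommRing R] {k : Type*} [Fintype k] [DecidableEq k] (X : Matrix k k R)

lemma fromCols_one_mul_transpose :
    fromCols (1 : Matrix k k R) X * (fromCols (1 : Matrix k k R) X)ᵀ = 1 + X * Xᵀ := by
  rw [transpose_fromCols, fromCols_mul_fromRows, transpose_one, one_mul]

lemma dualCode_rowSpan_fromCols_one_le (hX : X * Xᵀ = -1) :
    dualCode (rowSpan (fromCols (1 : Matrix k k R) X)) ≤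
      rowSpan (fromCols (1 : Matrix k k R) X) := by
  have hX' : Xᵀ * X = -1 := by
    have h : -Xᵀ * X = 1 := mul_eq_one_comm.1 (by rw [mul_neg, hX, neg_neg])
    rwa [neg_mul, neg_eq_iff_eq_neg] at h
  intro x hx
  obtain ⟨u, v, rfl⟩ : ∃ u v, x = Sum.elim u v := ⟨_, _, (Sum.elim_comp_inl_inr x).symm⟩
  rw [mem_dualCode_rowSpan_iff, fromCols_mulVec_sumElim, one_mulVec,
    add_eq_zero_iff_eq_neg] at hx
  have hv : u ᵥ* X = v := by
    rw [hx, neg_vecMul, ← vecMul_transpose, vecMul_vecMul, hX', vecMul_neg, vecMul_one, neg_neg]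
  simpa [vecMul_fromCols, hv] using vecMul_mem_rowSpan u (fromCols (1 : Matrix k k R) X)

lemma rowSpan_fromCols_one_le_dualCode_iff :
    rowSpan (fromCols (1 : Matrix k k R) X) ≤ dualCode (rowSpan (fromCols (1 : Matrix k k R) X)) ↔
      X * Xᵀ = -1 := by
  rw [rowSpan_le_dualCode_iff, fromCols_one_mul_transpose, add_eq_zero_iff_eq_neg']

theorem isSelfDual_rowSpan_fromCols_one_iff :
    IsSelfDual (rowSpan (fromCols (1 : Matrix k k R) X)) ↔ X * Xᵀ = -1 :=
  ⟨fun h => (rowSpan_fromCols_one_le_dualCode_iff X).1 h.le, fun hX =>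
    ((rowSpan_fromCols_one_le_dualCode_iff X).2 hX).antisymm
      (dualCode_rowSpan_fromCols_one_le X hX)⟩

end Systematic

section TwoBlockCirculant

variable {R : Type*} [CommRing R] {n : Type*} [Fintype n] [DecidableEq n]
  (B C : Matrix n n R)

lemma fromBlocks_mul_transpose_eq_neg_one_iff :
    fromBlocks B C C B * (fromBlocks B C C B)ᵀ = -1 ↔
      B * Bᵀ + C * Cᵀ = -1 ∧ B * Cᵀ + C * Bᵀ = 0 := by
  rw [fromBlocks_transpose, fromBlocks_multiply, ← fromBlocks_one, fromBlocks_neg, neg_zero,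
    fromBlocks_inj, add_comm (C * Bᵀ), add_comm (C * Cᵀ)]
  tauto

lemma add_mul_transpose_add_eq_one_iff [CharP R 2] :
    (B * Bᵀ + C * Cᵀ = -1 ∧ B * Cᵀ + C * Bᵀ = 0) ↔
      ((B + C) * (B + C)ᵀ = 1 ∧ B * Cᵀ = C * Bᵀ) := by
  have neg_self (A : Matrix n n R) : -A = A := by ext; exact CharTwo.neg_eq _
  have expand : (B + C) * (B + C)ᵀ = B * Bᵀ + C * Cᵀ + (B * Cᵀ + C * Bᵀ) := by
    rw [transpose_add]; noncomm_ring
  simp only [add_eq_zero_iff_eq_neg, neg_self, expand]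
  refine and_congr_left fun h => ?_
  rw [h, neg_eq_iff_add_eq_zero.1 (neg_self _), add_zero]

end TwoBlockCirculant

theorem selfDual_of_two_block_circulant_general
    {R : Type*} [CommRing R] [CharP R 2]
    {n : ℕ} (B C : Matrix (Fin n) (Fin n) R) :
    IsSelfDual (rowSpan (Matrix.fromCols (1 : Matrix (Fin n ⊕ Fin n) (Fin n ⊕ Fin n) R) (Matrix.fromBlocks B C C B))) ↔
      ((B + C) * (B + C)ᵀ = 1 ∧ B * Cᵀ = C * Bᵀ) := by
  rw [isSelfDual_rowSpan_fromCols_one_iff, fromBlocks_mul_transpose_eq_neg_one_iff,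
    add_mul_transpose_add_eq_one_iff]

/-- Lemma 2.1: over a finite commutative Frobenius ring of characteristic 2, the code
generated by `(I | [[B,C],[C,B]])` is self-dual iff `(B+C)(B+C)ᵀ = I` and `BCᵀ = CBᵀ`. -/
theorem selfDual_of_two_block_circulant
    {R : Type*} [CommRing R] [Fintype R] [CharP R 2]
    (hFrob : Module.Injective R R)
    {n : ℕ} (B C : Matrix (Fin n) (Fin n) R) :
    IsSelfDual (rowSpan (Matrix.fromCols (1 : Matrix (Fin n ⊕ Fin n) (Fin n ⊕ Fin n) R) (Matrix.fromBlocks B C C B))) ↔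
      ((B + C) * (B + C)ᵀ = 1 ∧ B * Cᵀ = C * Bᵀ) :=
  selfDual_of_two_block_circulant_general B C
end

section
/- Let R be a nontrivial commutative ring and let G be a finite group of order n > 1 with a fixed enumeration of its elements. Then σ(v) is a symmetric matrix for every v in the group ring RG if and only if G is an abelian group of exponent 2 (i.e. G is commutative and every element g ∈ G satisfies g² = e). -/
open Matrix

/-- The matrix `σ(v)` of a group ring element `v` with respect to a fixed enumeration `e`
of the group elements: its `(i,j)` entry is the coefficient of `v` at `(e i)⁻¹ * (e j)`. -/
def sigma {R : Type*} [CommRing R] {G : Type*} [Group G] {ι : Type*}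
    (e : ι ≃ G) (v : MonoidAlgebra R G) : Matrix ι ι R :=
  Matrix.of fun i j => v.coeff ((e i)⁻¹ * e j)

/-- The canonical involution `v ↦ v* = ∑ α_g g⁻¹` on a group ring. -/
def invol {R : Type*} [CommRing R] {G : Type*} [Group G]
    (v : MonoidAlgebra R G) : MonoidAlgebra R G :=
  MonoidAlgebra.ofCoeff (Finsupp.equivMapDomain (Equiv.inv G) v.coeff)

/-! Transposing `σ(v)` replaces the coefficient at `g` by the one at `g⁻¹`, so `σ(v)ᵀ = σ(v*)`.
Since `σ` is injective, all `σ(v)` are symmetric iff the involution `*` is the identity, i.e. iff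
every element of `G` is its own inverse; and a group in which inversion is trivial is abelian,
since `x * y = (x * y)⁻¹ = y⁻¹ * x⁻¹ = y * x`. -/

section GroupRing

variable {R : Type*} [CommRing R] {G : Type*} [Group G]

theorem coeff_invol (v : MonoidAlgebra R G) (g : G) : (invol v).coeff g = v.coeff g⁻¹ := rfl

theorem sigma_transpose {ι : Type*} (e : ι ≃ G) (v : MonoidAlgebra R G) :
    (sigma e v)ᵀ = sigma e (invol v) := by
  ext i j
  simp [sigma, coeff_invol]

theorem sigma_injective {ι : Type*} (e : ι ≃ G) :
    Function.Injective (sigma (R := R) e) := by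
  intro v w h
  ext g
  simpa [sigma] using congrFun₂ h (e.symm 1) (e.symm g)

theorem forall_invol_eq_self_iff [Nontrivial R] :
    (∀ v : MonoidAlgebra R G, invol v = v) ↔ ∀ g : G, g⁻¹ = g := by
  refine ⟨fun h g => ?_, fun h v => ?_⟩
  · by_contra hg
    have := congrArg (MonoidAlgebra.coeff · g) (h (MonoidAlgebra.single g⁻¹ (1 : R)))
    simp [coeff_invol, Ne.symm hg] at this
  · ext g
    rw [coeff_invol, h]

end GroupRing

theorem Group.forall_inv_eq_self_iff {G : Type*} [Group G] :
    (∀ g : G, g⁻¹ = g) ↔ (∀ x y : G, x * y = y * x) ∧ ∀ g : G, g ^ 2 = 1 := by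
  refine ⟨fun h => ⟨fun x y => ?_, fun g => ?_⟩, fun ⟨_, h⟩ g => ?_⟩
  · rw [← h (x * y), _root_.mul_inv_rev, h, h]
  · rw [sq, ← inv_eq_iff_mul_eq_one, h]
  · rw [inv_eq_iff_mul_eq_one, ← sq, h]

theorem sigma_symmetric_iff_abelian_exponent_two_general
    {R : Type*} [CommRing R] [Nontrivial R] {G : Type*} [Group G]
    {n : ℕ} (e : Fin n ≃ G) :
    (∀ v : MonoidAlgebra R G, (sigma e v)ᵀ = sigma e v) ↔
      ((∀ x y : G, x * y = y * x) ∧ ∀ g : G, g ^ 2 = 1) := by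
  simp_rw [sigma_transpose, (sigma_injective e).eq_iff]
  rw [forall_invol_eq_self_iff, Group.forall_inv_eq_self_iff]

/-- Lemma 2.4: for a nontrivial commutative ring `R` and a finite group `G` of order
`n > 1`, `σ(v)` is symmetric for every `v ∈ RG` iff `G` is abelian of exponent 2. -/
theorem sigma_symmetric_iff_abelian_exponent_two
    {R : Type*} [CommRing R] [Nontrivial R] {G : Type*} [Group G] [Fintype G]
    {n : ℕ} (hn : 1 < n) (e : Fin n ≃ G) :
    (∀ v : MonoidAlgebra R G, (sigma e v)ᵀ = sigma e v) ↔
      ((∀ x y : G, x * y = y * x) ∧ ∀ g : G, g ^ 2 = 1) :=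
  sigma_symmetric_iff_abelian_exponent_two_general e
end

section
/- Let R be a commutative ring and let X be an n×n matrix over R with rows and columns indexed by Z/nZ. Then X A = A X^T holds for every n×n reverse circulant matrix A over R if and only if X is a circulant matrix. -/
open Matrix

/-- A matrix indexed by `ZMod n` is reverse circulant if its `(i,j)` entry
depends only on `i + j`. -/
def IsRevCirculant {R : Type*} {n : ℕ} (A : Matrix (ZMod n) (ZMod n) R) : Prop :=
  ∃ a : ZMod n → R, ∀ i j, A i j = a (i + j)

/-- A matrix indexed by `ZMod n` is circulant if its `(i,j)` entry
depends only on `j - i`. -/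
def IsCirculant {R : Type*} {n : ℕ} (A : Matrix (ZMod n) (ZMod n) R) : Prop :=
  ∃ a : ZMod n → R, ∀ i j, A i j = a (j - i)

/-- Lemma 2.5: a matrix `X` satisfies `XA = AXᵀ` for every reverse circulant matrix `A`
iff `X` is circulant. -/
theorem commutes_with_revCirculant_iff_circulant
    {R : Type*} [CommRing R] {n : ℕ} [NeZero n] (X : Matrix (ZMod n) (ZMod n) R) :
    (∀ A : Matrix (ZMod n) (ZMod n) R, IsRevCirculant A → X * A = A * Xᵀ) ↔
      IsCirculant X := by
  constructor
  · intro h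
    refine ⟨fun t => X 0 t, fun i j => ?_⟩
    have key := h (Matrix.of fun p q => if p + q = j then (1 : R) else 0)
      ⟨fun t => if t = j then 1 else 0, fun p q => rfl⟩
    have := congrFun (congrFun key i) 0
    simpa [Matrix.mul_apply, Matrix.of_apply, mul_ite, ite_mul,
      show ∀ x : ZMod n, (i + x = j) ↔ (x = j - i) from
        fun x => eq_sub_iff_add_eq'.symm, Finset.sum_ite_eq'] using this
  · rintro ⟨a, ha⟩ A ⟨b, hb⟩
    ext i j
    simp only [Matrix.mul_apply, Matrix.transpose_apply, ha, hb]
    refine Fintype.sum_equiv (Equiv.addRight (j - i)) _ _ fun k => ?_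
    simp only [Equiv.coe_addRight]
    rw [mul_comm]
    congr 1 <;> congr 1 <;> ring
end

section
/- If C is a self-dual code of length n over the ring F_2 + uF_2 (where u² = 0), then its Gray image φ(C), obtained by applying the map a + bu ↦ (b, a + b) coordinatewise, is a self-dual binary code of length 2n. -/
open Matrix
set_option synthInstance.maxHeartbeats 400000

/-- The Gray map `φ : (F₂ + uF₂)ⁿ → F₂²ⁿ`, sending `a + bu ↦ (b, a + b)`
coordinatewise, where `F₂ + uF₂` is realized as the dual numbers over `ZMod 2`. -/
def grayMap {n : ℕ} (v : Fin n → DualNumber (ZMod 2)) : (Fin n ⊕ Fin n) → ZMod 2 :=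
  Sum.elim (fun i => (v i).snd) (fun i => (v i).fst + (v i).snd)

/-- The Gray map as a `ZMod 2`-linear map. -/
def grayLinear {n : ℕ} :
    (Fin n → DualNumber (ZMod 2)) →ₗ[ZMod 2] ((Fin n ⊕ Fin n) → ZMod 2) where
  toFun := grayMap
  map_add' v w := by
    funext j
    cases j with
    | inl i => simp [grayMap]
    | inr i => simp [grayMap]; ring
  map_smul' r v := by
    funext j
    cases j with
    | inl i => simp [grayMap, TrivSqZeroExt.snd_smul]
    | inr i =>
        simp [grayMap, TrivSqZeroExt.snd_smul, TrivSqZeroExt.fst_smul, smul_eq_mul]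
        ring

lemma gray_inner {n : ℕ} (x y : Fin n → DualNumber (ZMod 2)) :
    ∑ j, grayMap x j * grayMap y j
      = (∑ i, x i * y i).fst + (∑ i, x i * y i).snd := by
  rw [Fintype.sum_sum_type, TrivSqZeroExt.fst_sum, TrivSqZeroExt.snd_sum,
    ← Finset.sum_add_distrib, ← Finset.sum_add_distrib]
  refine Finset.sum_congr rfl fun i _ => ?_
  simp only [grayMap, Sum.elim_inl, Sum.elim_inr, TrivSqZeroExt.fst_mul,
    TrivSqZeroExt.snd_mul, smul_eq_mul]
  have hop : ∀ a b : ZMod 2, MulOpposite.op a • b = b * a := fun _ _ => rfl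
  simp only [hop]
  have : ∀ a b c d : ZMod 2, b * d + (a + b) * (c + d) = a * c + (a * d + b * c) := by decide
  exact this _ _ _ _

/-- If `C` is a self-dual code of length `n` over `F₂ + uF₂`, then its Gray image is a
self-dual binary code of length `2n`. -/
theorem grayImage_selfDual {n : ℕ}
    (C : Submodule (DualNumber (ZMod 2)) (Fin n → DualNumber (ZMod 2)))
    (h : IsSelfDual C) :
    IsSelfDual (Submodule.span (ZMod 2) (grayMap '' (C : Set (Fin n → DualNumber (ZMod 2))))) := by
  have himg : grayMap '' (C : Set (Fin n → DualNumber (ZMod 2)))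
      = ↑(Submodule.map grayLinear (C.restrictScalars (ZMod 2))) := by
    rw [Submodule.map_coe]
    rfl
  rw [himg, Submodule.span_eq]
  set D := Submodule.map grayLinear (C.restrictScalars (ZMod 2)) with hD
  apply le_antisymm
  · -- D ≤ dualCode D
    rintro z ⟨x, hx, rfl⟩ w ⟨y, hy, rfl⟩
    have hxy : ∑ i, x i * y i = 0 := by
      have := h ▸ hx
      exact this y hy
    show ∑ j, grayMap x j * grayMap y j = 0
    rw [gray_inner, hxy]
    simp
  · -- dualCode D ≤ D
    intro z hz
    set x : Fin n → DualNumber (ZMod 2) :=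
      fun i => (⟨z (Sum.inr i) + z (Sum.inl i), z (Sum.inl i)⟩ : TrivSqZeroExt (ZMod 2) (ZMod 2))
      with hxdef
    have hgx : grayMap x = z := by
      funext j
      cases j with
      | inl i => rfl
      | inr i =>
        show (z (Sum.inr i) + z (Sum.inl i)) + z (Sum.inl i) = z (Sum.inr i)
        rw [add_assoc, CharTwo.add_self_eq_zero, add_zero]
    have hxC : x ∈ C := by
      rw [h]
      intro c hc
      -- first: fst of inner product is 0
      have h2 : ∑ j, grayMap x j * grayMap ((DualNumber.eps : DualNumber (ZMod 2)) • c) j = 0 := by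
        rw [hgx]
        exact hz (grayMap ((DualNumber.eps : DualNumber (ZMod 2)) • c))
          ⟨(DualNumber.eps : DualNumber (ZMod 2)) • c, C.smul_mem _ hc, rfl⟩
      have h1 : ∑ j, grayMap x j * grayMap c j = 0 := by
        rw [hgx]
        exact hz (grayMap c) ⟨c, hc, rfl⟩
      rw [gray_inner] at h1 h2
      have hes : (∑ i, x i * ((DualNumber.eps : DualNumber (ZMod 2)) • c) i) = (DualNumber.eps : DualNumber (ZMod 2)) * ∑ i, x i * c i := by
        rw [Finset.mul_sum]
        refine Finset.sum_congr rfl fun i _ => ?_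
        simp [smul_eq_mul]
        ring
      rw [hes] at h2
      have hfst : (∑ i, x i * c i).fst = 0 := by
        have e1 : ((DualNumber.eps : DualNumber (ZMod 2)) * ∑ i, x i * c i).fst = 0 := by
          rw [TrivSqZeroExt.fst_mul, DualNumber.fst_eps, zero_mul]
        have e2 : ((DualNumber.eps : DualNumber (ZMod 2)) * ∑ i, x i * c i).snd = (∑ i, x i * c i).fst := by
          rw [TrivSqZeroExt.snd_mul, DualNumber.fst_eps, DualNumber.snd_eps, zero_smul,
            zero_add]
          exact one_mul _
        rw [e1, e2, zero_add] at h2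
        exact h2
      have hsnd : (∑ i, x i * c i).snd = 0 := by
        rw [hfst, zero_add] at h1
        exact h1
      exact TrivSqZeroExt.ext hfst hsnd
    exact ⟨x, hxC, hgx⟩
end
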